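/- arXiv:1305.4232 — 3 statements merged into one kernel-verified Lean document; each statement's English description precedes it below -/
import Mathlib

section
/- Let a_t : M' → ℝ be continuous on a closed Riemannian manifold M' and {X'_n} an orthonormal basis of L²(TM') such that ∫_{M'} ⟨X'_n, X'_m⟩ a_t dV' = 0 for all n ≠ m and ∫_{M'} ⟨X'_n, X'_n⟩ a_t dV' = 1 for all n. If M' is connected, then a_t ≡ 1. -/
/-!
For every `n` the field `a • X n - X n` has inner product
`∫ ⟪X n, X m⟫ a - ∫ ⟪X n, X m⟫ = 0` with every `X m`, so completeness makes it vanish a.e.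
Hence a.e. on the open set `{a ≠ 1}` all `X n` vanish, so any constant field supported there is
orthogonal to the whole basis and vanishes a.e. too; this forces `{a ≠ 1}` to be null, hence empty
since `μ` charges open sets.
-/

open MeasureTheory RealInnerProductSpace

section CompleteFamily

variable {α F : Type*} [MeasurableSpace α] {μ : Measure α}
  [NormedAddCommGroup F] [InnerProductSpace ℝ F] {X : ℕ → α → F}

lemma MeasureTheory.MemLp.integrable_inner {f g : α → F} (hf : MemLp f 2 μ) (hg : MemLp g 2 μ) :
    Integrable (fun x => ⟪f x, g x⟫) μ := by
  refine (L2.integrable_inner (𝕜 := ℝ) (hf.toLp f) (hg.toLp g)).congr ?_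
  filter_upwards [hf.coeFn_toLp, hg.coeFn_toLp] with x hfx hgx
  rw [hfx, hgx]

lemma ae_smul_eq_self_of_integral_inner_mul_eq
    (hcomplete : ∀ Y : α → F, MemLp Y 2 μ → (∀ m, ∫ x, ⟪Y x, X m x⟫ ∂μ = 0) → Y =ᵐ[μ] 0)
    (hX2 : ∀ m, MemLp (X m) 2 μ) {a : α → ℝ} {n : ℕ}
    (haX : MemLp (fun x => a x • X n x) 2 μ)
    (h : ∀ m, ∫ x, ⟪X n x, X m x⟫ * a x ∂μ = ∫ x, ⟪X n x, X m x⟫ ∂μ) :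
    (fun x => a x • X n x) =ᵐ[μ] X n := by
  have hzero : (fun x => a x • X n x - X n x) =ᵐ[μ] 0 := by
    refine hcomplete _ (haX.sub (hX2 n)) fun m => ?_
    simp_rw [inner_sub_left]
    rw [integral_sub (haX.integrable_inner (hX2 m)) ((hX2 n).integrable_inner (hX2 m)), ← h m]
    simp_rw [real_inner_smul_left, mul_comm (a _)]
    exact sub_self _
  filter_upwards [hzero] with x hx
  exact sub_eq_zero.mp hx

lemma measure_eq_zero_of_ae_forall_eq_zero_on [IsFiniteMeasure μ]
    (hcomplete : ∀ Y : α → F, MemLp Y 2 μ → (∀ m, ∫ x, ⟪Y x, X m x⟫ ∂μ = 0) → Y =ᵐ[μ] 0)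
    {S : Set α} (hS : MeasurableSet S) {v : F} (hv : v ≠ 0)
    (hvanish : ∀ᵐ x ∂μ, x ∈ S → ∀ n, X n x = 0) :
    μ S = 0 := by
  have horth : ∀ n, ∫ x, ⟪S.indicator (fun _ => v) x, X n x⟫ ∂μ = 0 := fun n => by
    refine integral_eq_zero_of_ae ?_
    filter_upwards [hvanish] with x hx
    by_cases hxS : x ∈ S
    · simp [hx hxS n]
    · simp [hxS]
  have hind := hcomplete _ (memLp_indicator_const 2 hS v (Or.inr (measure_ne_top μ S))) horth
  refine measure_eq_zero_iff_ae_notMem.mpr ?_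
  filter_upwards [hind] with x hx hxS
  exact hv (by simpa [hxS] using hx)

end CompleteFamily

theorem density_eq_one_of_orthonormality_general
    (M' : Type*) [TopologicalSpace M'] [MeasurableSpace M'] [BorelSpace M']
    (μ : Measure M') [IsFiniteMeasure μ] [μ.IsOpenPosMeasure]
    (F : Type*) [NormedAddCommGroup F] [InnerProductSpace ℝ F]
    (X : ℕ → M' → F)
    (hX2 : ∀ n, MemLp (X n) 2 μ)
    (horth : ∀ n m : ℕ,
      (∫ x, ⟪X n x, X m x⟫ ∂μ) = if n = m then (1 : ℝ) else 0)
    (hcomplete : ∀ Y : M' → F, MemLp Y 2 μ →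
      (∀ n : ℕ, (∫ x, ⟪Y x, X n x⟫ ∂μ) = 0) → Y =ᵐ[μ] 0)
    (a : M' → ℝ) (ha : Continuous a)
    (haX : ∀ n : ℕ, MemLp (fun x => a x • X n x) 2 μ)
    (h0 : ∀ n m : ℕ, n ≠ m → (∫ x, ⟪X n x, X m x⟫ * a x ∂μ) = 0)
    (h1 : ∀ n : ℕ, (∫ x, ⟪X n x, X n x⟫ * a x ∂μ) = 1) :
    ∀ x : M', a x = 1 := by
  have hfix : ∀ n, (fun x => a x • X n x) =ᵐ[μ] X n := fun n =>
    ae_smul_eq_self_of_integral_inner_mul_eq hcomplete hX2 (haX n) fun m => by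
      rw [horth n m]
      split_ifs with hnm
      · exact hnm ▸ h1 n
      · exact h0 n m hnm
  have hvanish : ∀ᵐ x ∂μ, x ∈ {x | a x ≠ 1} → ∀ n, X n x = 0 := by
    filter_upwards [ae_all_iff.mpr hfix] with x hx hax n
    have hzero : (a x - 1) • X n x = 0 := by rw [sub_smul, one_smul, hx n, sub_self]
    exact (smul_eq_zero.mp hzero).resolve_left (sub_ne_zero.mpr hax)
  have hF : Nontrivial F := by
    by_contra hF
    have := not_nontrivial_iff_subsingleton.mp hF
    simpa [show X 0 = 0 from Subsingleton.elim _ _] using horth 0 0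
  obtain ⟨v, hv⟩ := exists_ne (0 : F)
  have hnull := measure_eq_zero_of_ae_forall_eq_zero_on hcomplete
    (isOpen_ne_fun ha continuous_const).measurableSet hv hvanish
  exact congrFun ((ha.ae_eq_iff_eq μ continuous_const).mp (ae_iff.mpr (by simpa using hnull)))

/-- Abstract form of: on a connected closed Riemannian manifold `M'` with orthonormal
basis `{X'_n}` of `L²(TM')` (values modelled in a Hilbert space `F`), if a continuous
function `a_t` satisfies `∫ ⟨X'_n, X'_m⟩ a_t dV' = 0` for `n ≠ m` and
`∫ ⟨X'_n, X'_n⟩ a_t dV' = 1` for all `n`, then `a_t ≡ 1`. -/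
theorem density_eq_one_of_orthonormality
    (M' : Type*) [TopologicalSpace M'] [MeasurableSpace M'] [BorelSpace M']
    [PreconnectedSpace M']
    (μ : Measure M') [IsFiniteMeasure μ] [μ.IsOpenPosMeasure]
    (F : Type*) [NormedAddCommGroup F] [InnerProductSpace ℝ F]
    (X : ℕ → M' → F)
    (hX2 : ∀ n, MemLp (X n) 2 μ)
    (horth : ∀ n m : ℕ,
      (∫ x, ⟪X n x, X m x⟫ ∂μ) = if n = m then (1 : ℝ) else 0)
    (hcomplete : ∀ Y : M' → F, MemLp Y 2 μ →
      (∀ n : ℕ, (∫ x, ⟪Y x, X n x⟫ ∂μ) = 0) → Y =ᵐ[μ] 0)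
    (a : M' → ℝ) (ha : Continuous a)
    (haX : ∀ n : ℕ, MemLp (fun x => a x • X n x) 2 μ)
    (h0 : ∀ n m : ℕ, n ≠ m → (∫ x, ⟪X n x, X m x⟫ * a x ∂μ) = 0)
    (h1 : ∀ n : ℕ, (∫ x, ⟪X n x, X n x⟫ * a x ∂μ) = 1) :
    ∀ x : M', a x = 1 :=
  density_eq_one_of_orthonormality_general M' μ F X hX2 horth hcomplete a ha haX h0 h1
end

section
/- Let K be a compact metric space and E a precompact subset of the metric space (F(K), HD) of non-empty closed subsets of K with Hausdorff distance. Then the set F(E) of non-empty closed subsets of E, equipped with the Hausdorff distance induced by HD, is precompact. -/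
open TopologicalSpace

theorem TotallyBounded.univ_subtype {α : Type*} [UniformSpace α] {s : Set α}
    (hs : TotallyBounded s) : TotallyBounded (Set.univ : Set s) := by
  rw [← Subtype.coe_preimage_self s]
  exact totallyBounded_preimage isUniformEmbedding_subtype_val.isUniformInducing hs

theorem TopologicalSpace.Closeds.totallyBounded_univ_nonempty {α : Type*} [UniformSpace α]
    (h : TotallyBounded (Set.univ : Set α)) :
    TotallyBounded (Set.univ : Set {t : Closeds α // (t : Set α).Nonempty}) := by
  have hall : TotallyBounded (Set.univ : Set (Closeds α)) := by
    simpa using Closeds.totallyBounded_subsets_of_totallyBounded h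
  rw [← Set.preimage_univ (f := Subtype.val)]
  exact totallyBounded_preimage isUniformEmbedding_subtype_val.isUniformInducing hall

theorem precompact_closeds_of_precompact_subset_general
    (K : Type*) [MetricSpace K]
    (E : Set (NonemptyCompacts K))
    (hE : TotallyBounded E) :
    TotallyBounded
      (Set.univ : Set {t : Closeds ↥E // (t : Set ↥E).Nonempty}) :=
  Closeds.totallyBounded_univ_nonempty hE.univ_subtype

/-- If `K` is a compact metric space and `E` is a precompact subset of the space
`F(K)` of non-empty closed (equivalently, non-empty compact, as `K` is compact)
subsets of `K` with the Hausdorff distance, then the space of non-empty closed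
subsets of `E`, with the induced Hausdorff distance, is precompact. -/
theorem precompact_closeds_of_precompact_subset
    (K : Type*) [MetricSpace K] [CompactSpace K]
    (E : Set (NonemptyCompacts K))
    (hE : TotallyBounded E) :
    TotallyBounded
      (Set.univ : Set {t : Closeds ↥E // (t : Set ↥E).Nonempty}) :=
  precompact_closeds_of_precompact_subset_general K E hE
end

section
/- Let (λ_n)_{n≥1} be nonnegative reals and c_{nm} reals with c_{nm}² ≤ c_{nn} c_{mm}, c_{nn} ≥ 0, and suppose μ(λ) := Σ_{n : λ_n ≤ λ} c_{nn} satisfies μ(λ) ≤ C λ^{d/2} for all λ > 0. Then for every α ≥ 0 and t > 0, Σ_{n,m} (λ_n + λ_m)^α e^{-t(λ_n+λ_m)} c_{nm}² ≤ C² E F(α,d) t^{-α-d}, where F(α,d) = ∫_0^∞∫_0^∞ (x+y)^α x^d y^d e^{-(x+y)} dx dy and E is a universal constant depending only on α and d. -/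
open MeasureTheory

lemma aux_rpow_add_le (α : ℝ) (hα : 0 ≤ α) {a b : ℝ} (ha : 0 ≤ a) (hb : 0 ≤ b) :
    (a + b) ^ α ≤ 2 ^ α * (a ^ α + b ^ α) := by
  have h2 : (0:ℝ) ≤ 2 ^ α := Real.rpow_nonneg (by norm_num) α
  rcases le_total a b with h | h
  · have haα : 0 ≤ a ^ α := Real.rpow_nonneg ha α
    calc (a+b)^α ≤ (2*b)^α := Real.rpow_le_rpow (by linarith) (by linarith) hα
    _ = 2^α * b^α := Real.mul_rpow (by norm_num) hb
    _ ≤ 2^α * (a^α + b^α) := by nlinarith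
  · have hbα : 0 ≤ b ^ α := Real.rpow_nonneg hb α
    calc (a+b)^α ≤ (2*a)^α := Real.rpow_le_rpow (by linarith) (by linarith) hα
    _ = 2^α * a^α := Real.mul_rpow (by norm_num) ha
    _ ≤ 2^α * (a^α + b^α) := by nlinarith

lemma aux_summable_poly_exp (N : ℕ) :
    Summable (fun k : ℕ => ((k : ℝ) + 1) ^ N * Real.exp (-(k : ℝ))) := by
  have h1 : Summable (fun m : ℕ => (m : ℝ) ^ N * Real.exp (-1) ^ m) :=
    summable_pow_mul_geometric_of_norm_lt_one N (by
      rw [Real.norm_eq_abs, abs_of_pos (Real.exp_pos _)]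
      exact Real.exp_lt_one_iff.2 (by norm_num))
  have h2 := (summable_nat_add_iff 1).2 h1
  have h3 := h2.mul_left (Real.exp 1)
  refine h3.congr fun k => ?_
  have he : Real.exp (-1) ^ (k+1) = Real.exp (-((k:ℝ)+1)) := by
    rw [← Real.exp_nat_mul]
    norm_num
  push_cast
  rw [he, show Real.exp 1 * ((↑k + 1) ^ N * Real.exp (-((k:ℝ) + 1)))
      = ((k:ℝ) + 1) ^ N * (Real.exp 1 * Real.exp (-((k:ℝ) + 1))) by ring,
    ← Real.exp_add]
  norm_num

lemma aux_single_sum (d : ℕ) (β : ℝ) (hβ : 0 ≤ β) (N : ℕ) (hN : β + (d:ℝ)/2 ≤ (N:ℝ))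
    (lam : ℕ → ℝ) (c : ℕ → ℕ → ℝ) (C : ℝ) (hC : 0 < C)
    (hlam : ∀ n, 0 ≤ lam n) (hcd : ∀ n, 0 ≤ c n n)
    (hmu : ∀ L : ℝ, 0 < L → ∀ s : Finset ℕ, (∀ n ∈ s, lam n ≤ L) →
      (∑ n ∈ s, c n n) ≤ C * L ^ ((d : ℝ) / 2))
    {t : ℝ} (ht : 0 < t) (s : Finset ℕ) :
    ∑ n ∈ s, lam n ^ β * Real.exp (-t * lam n) * c n n
      ≤ C * (∑' k : ℕ, ((k : ℝ) + 1) ^ N * Real.exp (-(k : ℝ))) * t ^ (-(β + (d:ℝ)/2)) := by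
  set S := ∑' k : ℕ, ((k : ℝ) + 1) ^ N * Real.exp (-(k : ℝ)) with hS
  have hSsum := aux_summable_poly_exp N
  have htp : 0 < t ^ (-(β + (d:ℝ)/2)) := Real.rpow_pos_of_pos ht _
  set φ : ℕ → ℕ := fun n => ⌊t * lam n⌋₊ with hφ
  set B := (s.sup φ) + 1 with hB
  have key : ∑ k ∈ Finset.range B, ∑ n ∈ s.filter (fun n => φ n = k),
      lam n ^ β * Real.exp (-t * lam n) * c n n
      = ∑ n ∈ s, lam n ^ β * Real.exp (-t * lam n) * c n n :=
    Finset.sum_fiberwise_of_maps_to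
      (fun n hn => Finset.mem_range.2 (Nat.lt_succ_of_le (Finset.le_sup hn))) _
  rw [← key]
  have hk : ∀ k ∈ Finset.range B,
      ∑ n ∈ s.filter (fun n => φ n = k), lam n ^ β * Real.exp (-t * lam n) * c n n
      ≤ C * (((k:ℝ)+1)^N * Real.exp (-(k:ℝ))) * t ^ (-(β + (d:ℝ)/2)) := by
    intro k _
    set L : ℝ := ((k:ℝ)+1)/t with hL
    have hLpos : 0 < L := div_pos (by positivity) ht
    have hmem : ∀ n ∈ s.filter (fun n => φ n = k), lam n ≤ L := by
      intro n hn
      have hk' : φ n = k := (Finset.mem_filter.1 hn).2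
      have h1 : t * lam n < (k:ℝ) + 1 := by
        have := Nat.lt_floor_add_one (t * lam n)
        rw [hφ] at hk'
        simpa [hk'] using this
      rw [hL, le_div_iff₀ ht]
      linarith [mul_comm t (lam n)]
    have step1 : ∑ n ∈ s.filter (fun n => φ n = k), lam n ^ β * Real.exp (-t * lam n) * c n n
        ≤ (L ^ β * Real.exp (-(k:ℝ))) * ∑ n ∈ s.filter (fun n => φ n = k), c n n := by
      rw [Finset.mul_sum]
      refine Finset.sum_le_sum fun n hn => ?_
      have hk' : φ n = k := (Finset.mem_filter.1 hn).2
      have ha1 : lam n ^ β ≤ L ^ β := Real.rpow_le_rpow (hlam n) (hmem n hn) hβ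
      have ha2 : Real.exp (-t * lam n) ≤ Real.exp (-(k:ℝ)) := by
        apply Real.exp_le_exp.2
        have : (k:ℝ) ≤ t * lam n := by
          rw [← hk', hφ]
          exact Nat.floor_le (mul_nonneg ht.le (hlam n))
        linarith
      have hw : lam n ^ β * Real.exp (-t * lam n) ≤ L ^ β * Real.exp (-(k:ℝ)) :=
        mul_le_mul ha1 ha2 (Real.exp_pos _).le (Real.rpow_nonneg hLpos.le _)
      exact mul_le_mul_of_nonneg_right hw (hcd n)
    have step2 : ∑ n ∈ s.filter (fun n => φ n = k), c n n ≤ C * L ^ ((d:ℝ)/2) :=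
      hmu L hLpos _ hmem
    have step3 : (L ^ β * Real.exp (-(k:ℝ))) * ∑ n ∈ s.filter (fun n => φ n = k), c n n
        ≤ (L ^ β * Real.exp (-(k:ℝ))) * (C * L ^ ((d:ℝ)/2)) := by
      apply mul_le_mul_of_nonneg_left step2
      positivity
    refine (step1.trans step3).trans ?_
    have hsplit : L ^ β * L ^ ((d:ℝ)/2) = L ^ (β + (d:ℝ)/2) := (Real.rpow_add hLpos _ _).symm
    have hLrw : L ^ (β + (d:ℝ)/2) = ((k:ℝ)+1) ^ (β + (d:ℝ)/2) * t ^ (-(β + (d:ℝ)/2)) := by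
      rw [hL, Real.div_rpow (by positivity) ht.le, Real.rpow_neg ht.le, div_eq_mul_inv]
    have hexp' : ((k:ℝ)+1) ^ (β + (d:ℝ)/2) ≤ ((k:ℝ)+1) ^ N := by
      rw [← Real.rpow_natCast ((k:ℝ)+1) N]
      exact Real.rpow_le_rpow_of_exponent_le (by simp [Nat.cast_nonneg]) hN
    have heq : (L ^ β * Real.exp (-(k:ℝ))) * (C * L ^ ((d:ℝ)/2))
        = C * (((k:ℝ)+1) ^ (β + (d:ℝ)/2) * Real.exp (-(k:ℝ))) * t ^ (-(β+(d:ℝ)/2)) := by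
      have h' : L ^ β * L ^ ((d:ℝ)/2) = ((k:ℝ)+1) ^ (β + (d:ℝ)/2) * t ^ (-(β + (d:ℝ)/2)) := by
        rw [hsplit, hLrw]
      calc (L ^ β * Real.exp (-(k:ℝ))) * (C * L ^ ((d:ℝ)/2))
          = C * Real.exp (-(k:ℝ)) * (L ^ β * L ^ ((d:ℝ)/2)) := by ring
        _ = _ := by rw [h']; ring
    rw [heq]
    exact mul_le_mul_of_nonneg_right (mul_le_mul_of_nonneg_left
      (mul_le_mul_of_nonneg_right hexp' (Real.exp_pos _).le) hC.le) htp.le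
  calc ∑ k ∈ Finset.range B, ∑ n ∈ s.filter (fun n => φ n = k),
        lam n ^ β * Real.exp (-t * lam n) * c n n
      ≤ ∑ k ∈ Finset.range B, C * (((k:ℝ)+1)^N * Real.exp (-(k:ℝ))) * t ^ (-(β + (d:ℝ)/2)) :=
        Finset.sum_le_sum hk
    _ = C * (∑ k ∈ Finset.range B, ((k:ℝ)+1)^N * Real.exp (-(k:ℝ))) * t ^ (-(β + (d:ℝ)/2)) := by
        rw [Finset.mul_sum, ← Finset.sum_mul]
    _ ≤ C * S * t ^ (-(β + (d:ℝ)/2)) := by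
        apply mul_le_mul_of_nonneg_right _ htp.le
        apply mul_le_mul_of_nonneg_left _ hC.le
        exact Summable.sum_le_tsum _ (fun k _ => by positivity) hSsum

lemma aux_pow_exp_bound (N2 : ℕ) {u : ℝ} (hu : 0 ≤ u) :
    u ^ N2 * Real.exp (-(u/2)) ≤ 2 ^ N2 * (N2.factorial : ℝ) := by
  have h1 : (u/2) ^ N2 / (N2.factorial : ℝ) ≤ Real.exp (u/2) := by
    have := Real.sum_le_exp_of_nonneg (by positivity : (0:ℝ) ≤ u/2) (N2+1)
    refine le_trans ?_ this
    exact Finset.single_le_sum (f := fun i => (u/2)^i / (i.factorial : ℝ))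
      (fun i _ => by positivity) (Finset.self_mem_range_succ N2)
  have hfac : (0:ℝ) < (N2.factorial : ℝ) := by positivity
  have h2 : (u/2) ^ N2 ≤ (N2.factorial : ℝ) * Real.exp (u/2) := by
    rw [div_le_iff₀ hfac] at h1; linarith
  have h3 : u ^ N2 ≤ 2 ^ N2 * (N2.factorial : ℝ) * Real.exp (u/2) := by
    have : u ^ N2 = 2 ^ N2 * (u/2) ^ N2 := by
      rw [← mul_pow]; ring_nf
    rw [this]
    nlinarith [pow_pos (by norm_num : (0:ℝ) < 2) N2]
  have hee : Real.exp (-(u/2)) * Real.exp (u/2) = 1 := by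
    rw [← Real.exp_add]; norm_num
  calc u ^ N2 * Real.exp (-(u/2))
      ≤ (2 ^ N2 * (N2.factorial : ℝ) * Real.exp (u/2)) * Real.exp (-(u/2)) :=
        mul_le_mul_of_nonneg_right h3 (Real.exp_pos _).le
    _ = 2 ^ N2 * (N2.factorial : ℝ) * (Real.exp (-(u/2)) * Real.exp (u/2)) := by ring
    _ = 2 ^ N2 * (N2.factorial : ℝ) := by rw [hee, mul_one]

lemma aux_integral_pos (α : ℝ) (hα : 0 ≤ α) (d : ℕ) :
    0 < ∫ q in Set.Ioi (0 : ℝ) ×ˢ Set.Ioi (0 : ℝ),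
        (q.1 + q.2) ^ α * q.1 ^ d * q.2 ^ d * Real.exp (-(q.1 + q.2)) := by
  set G : ℝ × ℝ → ℝ :=
    fun q => (q.1 + q.2) ^ α * q.1 ^ d * q.2 ^ d * Real.exp (-(q.1 + q.2)) with hG
  set s : Set (ℝ × ℝ) := Set.Ioi (0 : ℝ) ×ˢ Set.Ioi (0 : ℝ) with hs
  have hsm : MeasurableSet s := measurableSet_Ioi.prod measurableSet_Ioi
  have hGm : Measurable G := by
    rw [hG]; fun_prop
  set N2 : ℕ := ⌈α⌉₊ + 2 * d with hN2
  set M : ℝ := 1 + 2 ^ N2 * (N2.factorial : ℝ) with hM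
  have hM1 : (1:ℝ) ≤ M := by
    have : (0:ℝ) ≤ 2 ^ N2 * (N2.factorial : ℝ) := by positivity
    linarith
  -- pointwise bound on s
  have hbound : ∀ q ∈ s, G q ≤ M * (Real.exp (-(1/2) * q.1) * Real.exp (-(1/2) * q.2)) := by
    rintro ⟨x, y⟩ hq
    obtain ⟨hx, hy⟩ := hq
    simp only [Set.mem_Ioi] at hx hy
    set u := x + y with hu
    have hup : 0 < u := by dsimp [u]; linarith
    have h1 : x ^ d ≤ u ^ d := pow_le_pow_left₀ hx.le (by dsimp [u]; linarith) d
    have h2 : y ^ d ≤ u ^ d := pow_le_pow_left₀ hy.le (by dsimp [u]; linarith) d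
    have hG1 : G (x, y) ≤ u ^ α * u ^ d * u ^ d * Real.exp (-u) := by
      have hrn : (0:ℝ) ≤ u ^ α := Real.rpow_nonneg hup.le α
      simp only [hG]
      rw [← hu]
      have e1 : u ^ α * x ^ d * y ^ d ≤ u ^ α * u ^ d * u ^ d :=
        mul_le_mul (mul_le_mul le_rfl h1 (pow_nonneg hx.le d) hrn) h2
          (pow_nonneg hy.le d) (mul_nonneg hrn (pow_nonneg hup.le d))
      exact mul_le_mul_of_nonneg_right e1 (Real.exp_pos _).le
    have hG2 : u ^ α * u ^ d * u ^ d = u ^ (α + 2 * (d:ℝ)) := by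
      rw [← Real.rpow_natCast u d, ← Real.rpow_add hup, ← Real.rpow_add hup]
      ring_nf
    have hG3 : u ^ (α + 2 * (d:ℝ)) * Real.exp (-(u/2)) ≤ M := by
      rcases le_total u 1 with h | h
      · have : u ^ (α + 2 * (d:ℝ)) ≤ 1 :=
          Real.rpow_le_one hup.le h (by positivity)
        nlinarith [Real.exp_pos (-(u/2)), Real.exp_le_one_iff.2 (by linarith : -(u/2) ≤ 0),
          Real.rpow_nonneg hup.le (α + 2 * (d:ℝ))]
      · have hle : u ^ (α + 2 * (d:ℝ)) ≤ u ^ N2 := by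
          rw [← Real.rpow_natCast u N2]
          apply Real.rpow_le_rpow_of_exponent_le h
          push_cast [hN2]
          have := Nat.le_ceil α
          linarith
        have := aux_pow_exp_bound N2 (by linarith : (0:ℝ) ≤ u)
        have he := Real.exp_pos (-(u/2))
        rw [hM]
        nlinarith
    have hsplit : Real.exp (-u) = Real.exp (-(u/2)) * Real.exp (-(u/2)) := by
      rw [← Real.exp_add]; ring_nf
    have hexps : Real.exp (-(1/2) * x) * Real.exp (-(1/2) * y) = Real.exp (-(u/2)) := by
      rw [← Real.exp_add]; congr 1; dsimp [u]; ring
    calc G (x, y) ≤ u ^ α * u ^ d * u ^ d * Real.exp (-u) := hG1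
      _ = (u ^ (α + 2 * (d:ℝ)) * Real.exp (-(u/2))) * Real.exp (-(u/2)) := by
          rw [hG2, hsplit]; ring
      _ ≤ M * Real.exp (-(u/2)) :=
          mul_le_mul_of_nonneg_right hG3 (Real.exp_pos _).le
      _ = M * (Real.exp (-(1/2) * x) * Real.exp (-(1/2) * y)) := by rw [hexps]
  have hnonneg : ∀ q ∈ s, 0 ≤ G q := by
    rintro ⟨x, y⟩ hq
    obtain ⟨hx, hy⟩ := hq
    simp only [Set.mem_Ioi] at hx hy
    simp only [hG]
    exact mul_nonneg (mul_nonneg (mul_nonneg (Real.rpow_nonneg (by linarith) α)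
      (pow_nonneg hx.le d)) (pow_nonneg hy.le d)) (Real.exp_pos _).le
  have hpos : ∀ q ∈ s, 0 < G q := by
    rintro ⟨x, y⟩ hq
    obtain ⟨hx, hy⟩ := hq
    simp only [Set.mem_Ioi] at hx hy
    have h1 : (0:ℝ) < (x + y) ^ α := Real.rpow_pos_of_pos (by linarith) α
    have := Real.exp_pos (-(x+y))
    simp only [hG]
    positivity
  -- integrability of bound
  have hBint : Integrable (fun q : ℝ × ℝ =>
      M * (Real.exp (-(1/2) * q.1) * Real.exp (-(1/2) * q.2))) (volume.restrict s) := by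
    rw [hs, Measure.volume_eq_prod, ← Measure.prod_restrict]
    exact ((exp_neg_integrableOn_Ioi 0 (by norm_num : (0:ℝ) < 1/2)).mul_prod
      (exp_neg_integrableOn_Ioi 0 (by norm_num : (0:ℝ) < 1/2))).const_mul M
  have hGint : IntegrableOn G s := by
    refine Integrable.mono' hBint hGm.aestronglyMeasurable ?_
    rw [ae_restrict_iff' hsm]
    filter_upwards with q hq
    rw [Real.norm_eq_abs, abs_of_nonneg (hnonneg q hq)]
    exact hbound q hq
  have hae : 0 ≤ᵐ[volume.restrict s] G :=
    (ae_restrict_iff' hsm).2 (Filter.Eventually.of_forall hnonneg)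
  rw [setIntegral_pos_iff_support_of_nonneg_ae hae hGint]
  have hsup : Function.support G ∩ s = s := by
    apply Set.inter_eq_self_of_subset_right
    intro q hq
    exact (hpos q hq).ne'
  rw [hsup, hs, Measure.volume_eq_prod, Measure.prod_prod, Real.volume_Ioi]
  simp

/-- Abstract form of Lemma 3(c): if `c_{nm}² ≤ c_{nn} c_{mm}` and the counting sums
`μ(λ) = Σ_{λ_n ≤ λ} c_{nn}` satisfy `μ(λ) ≤ C λ^{d/2}`, then for all `α ≥ 0`, `t > 0`,
`Σ_{n,m} (λ_n+λ_m)^α e^{-t(λ_n+λ_m)} c_{nm}² ≤ C² E F(α,d) t^{-α-d}`, with `E` a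
universal constant depending only on `α` and `d`, and
`F(α,d) = ∫_0^∞∫_0^∞ (x+y)^α x^d y^d e^{-(x+y)} dx dy`. -/
theorem weighted_heat_double_sum_bound
    (α : ℝ) (hα : 0 ≤ α) (d : ℕ) (hd : 1 ≤ d) :
    ∃ E : ℝ, 0 < E ∧
      ∀ (lam : ℕ → ℝ) (c : ℕ → ℕ → ℝ) (C : ℝ), 0 < C →
        (∀ n, 0 ≤ lam n) → (∀ n, 0 ≤ c n n) →
        (∀ n m, (c n m) ^ 2 ≤ c n n * c m m) →
        (∀ L : ℝ, 0 < L → ∀ s : Finset ℕ, (∀ n ∈ s, lam n ≤ L) →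
          (∑ n ∈ s, c n n) ≤ C * L ^ ((d : ℝ) / 2)) →
        ∀ t : ℝ, 0 < t →
          Summable (fun p : ℕ × ℕ =>
            (lam p.1 + lam p.2) ^ α * Real.exp (-t * (lam p.1 + lam p.2)) *
              (c p.1 p.2) ^ 2) ∧
          (∑' p : ℕ × ℕ,
              (lam p.1 + lam p.2) ^ α * Real.exp (-t * (lam p.1 + lam p.2)) *
                (c p.1 p.2) ^ 2) ≤
            C ^ 2 * E *
              (∫ q in Set.Ioi (0 : ℝ) ×ˢ Set.Ioi (0 : ℝ),
                (q.1 + q.2) ^ α * q.1 ^ d * q.2 ^ d * Real.exp (-(q.1 + q.2))) *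
              t ^ (-α - (d : ℝ)) := by
  classical
  set N : ℕ := ⌈α⌉₊ + d with hNdef
  set S : ℝ := ∑' k : ℕ, ((k : ℝ) + 1) ^ N * Real.exp (-(k : ℝ)) with hSdef
  have hSsum := aux_summable_poly_exp N
  have hSpos : 0 < S := by
    have h0 : (1:ℝ) ≤ S := by
      have := Summable.le_tsum hSsum 0 (fun j _ => by positivity)
      simpa using this
    linarith
  set Fint : ℝ := ∫ q in Set.Ioi (0 : ℝ) ×ˢ Set.Ioi (0 : ℝ),
      (q.1 + q.2) ^ α * q.1 ^ d * q.2 ^ d * Real.exp (-(q.1 + q.2)) with hFdef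
  have hF : 0 < Fint := aux_integral_pos α hα d
  have hN1 : α + (d:ℝ)/2 ≤ (N:ℝ) := by
    have h1 := Nat.le_ceil α
    push_cast [hNdef]
    have : (0:ℝ) ≤ (d:ℝ) := Nat.cast_nonneg _
    linarith
  have hN0 : (0:ℝ) + (d:ℝ)/2 ≤ (N:ℝ) := by
    have h1 : (0:ℝ) ≤ ⌈α⌉₊ := Nat.cast_nonneg _
    push_cast [hNdef]
    have : (0:ℝ) ≤ (d:ℝ) := Nat.cast_nonneg _
    linarith
  have h2pos : (0:ℝ) < 2 ^ (α + 1) := Real.rpow_pos_of_pos (by norm_num) _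
  refine ⟨2 ^ (α + 1) * S ^ 2 / Fint, div_pos (mul_pos h2pos (pow_pos hSpos 2)) hF, ?_⟩
  intro lam c C hC hlam hcd hcs hmu t ht
  set f : ℕ → ℝ := fun n => lam n ^ α * Real.exp (-t * lam n) * c n n with hfdef
  set g : ℕ → ℝ := fun n => Real.exp (-t * lam n) * c n n with hgdef
  have hfnn : ∀ n, 0 ≤ f n := fun n => by
    simp only [hfdef]
    exact mul_nonneg (mul_nonneg (Real.rpow_nonneg (hlam n) α) (Real.exp_pos _).le) (hcd n)
  have hgnn : ∀ n, 0 ≤ g n := fun n =>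
    mul_nonneg (Real.exp_pos _).le (hcd n)
  have hfbdd : ∀ u : Finset ℕ, ∑ n ∈ u, f n ≤ C * S * t ^ (-(α + (d:ℝ)/2)) := fun u =>
    aux_single_sum d α hα N hN1 lam c C hC hlam hcd hmu ht u
  have hgbdd : ∀ u : Finset ℕ, ∑ n ∈ u, g n ≤ C * S * t ^ (-((0:ℝ) + (d:ℝ)/2)) := by
    intro u
    have h := aux_single_sum d 0 le_rfl N hN0 lam c C hC hlam hcd hmu ht u
    have he : ∑ n ∈ u, g n = ∑ n ∈ u, lam n ^ (0:ℝ) * Real.exp (-t * lam n) * c n n := by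
      refine Finset.sum_congr rfl fun n _ => ?_
      simp [hgdef, Real.rpow_zero]
    rw [he]
    exact h
  have hfsum : Summable f := summable_of_sum_le hfnn hfbdd
  have hgsum : Summable g := summable_of_sum_le hgnn hgbdd
  have hfts : ∑' n, f n ≤ C * S * t ^ (-(α + (d:ℝ)/2)) := Summable.tsum_le_of_sum_le hfsum hfbdd
  have hgts : ∑' n, g n ≤ C * S * t ^ (-((0:ℝ) + (d:ℝ)/2)) := Summable.tsum_le_of_sum_le hgsum hgbdd
  have hmul1 : Summable (fun p : ℕ × ℕ => f p.1 * g p.2) :=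
    hfsum.mul_of_nonneg hgsum hfnn hgnn
  have hmul2 : Summable (fun p : ℕ × ℕ => g p.1 * f p.2) :=
    hgsum.mul_of_nonneg hfsum hgnn hfnn
  set T : ℕ × ℕ → ℝ := fun p =>
    (lam p.1 + lam p.2) ^ α * Real.exp (-t * (lam p.1 + lam p.2)) * (c p.1 p.2) ^ 2 with hTdef
  have hTnn : ∀ p, 0 ≤ T p := fun p =>
    mul_nonneg (mul_nonneg (Real.rpow_nonneg (by
      have := hlam p.1; have := hlam p.2; linarith) α) (Real.exp_pos _).le) (sq_nonneg _)
  have hbound : ∀ p : ℕ × ℕ,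
      T p ≤ 2 ^ α * (f p.1 * g p.2) + 2 ^ α * (g p.1 * f p.2) := by
    rintro ⟨n, m⟩
    have hexp : Real.exp (-t * (lam n + lam m))
        = Real.exp (-t * lam n) * Real.exp (-t * lam m) := by
      rw [← Real.exp_add]; ring_nf
    have hr : (lam n + lam m) ^ α ≤ 2 ^ α * (lam n ^ α + lam m ^ α) :=
      aux_rpow_add_le α hα (hlam n) (hlam m)
    have h1 : T (n, m) ≤ (lam n + lam m) ^ α * Real.exp (-t * (lam n + lam m))
        * (c n n * c m m) :=
      mul_le_mul_of_nonneg_left (hcs n m) (by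
        exact mul_nonneg (Real.rpow_nonneg (by
          have := hlam n; have := hlam m; linarith) α) (Real.exp_pos _).le)
    have h2 : (lam n + lam m) ^ α * Real.exp (-t * (lam n + lam m)) * (c n n * c m m)
        ≤ 2 ^ α * (lam n ^ α + lam m ^ α) * (Real.exp (-t * lam n) * Real.exp (-t * lam m))
          * (c n n * c m m) := by
      rw [hexp]
      apply mul_le_mul_of_nonneg_right _ (mul_nonneg (hcd n) (hcd m))
      exact mul_le_mul_of_nonneg_right hr (mul_nonneg (Real.exp_pos _).le (Real.exp_pos _).le)
    refine (h1.trans h2).trans (le_of_eq ?_)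
    simp only [hfdef, hgdef]
    ring
  have hbsum : Summable (fun p : ℕ × ℕ =>
      2 ^ α * (f p.1 * g p.2) + 2 ^ α * (g p.1 * f p.2)) :=
    (hmul1.mul_left _).add (hmul2.mul_left _)
  have hTsum : Summable T := Summable.of_nonneg_of_le hTnn hbound hbsum
  refine ⟨hTsum, ?_⟩
  have hstep1 : ∑' p, T p ≤ 2 ^ α * ((∑' n, f n) * (∑' n, g n))
      + 2 ^ α * ((∑' n, g n) * (∑' n, f n)) := by
    calc ∑' p, T p ≤ ∑' p : ℕ × ℕ, (2 ^ α * (f p.1 * g p.2) + 2 ^ α * (g p.1 * f p.2)) :=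
        Summable.tsum_le_tsum hbound hTsum hbsum
      _ = 2 ^ α * (∑' p : ℕ × ℕ, f p.1 * g p.2) + 2 ^ α * (∑' p : ℕ × ℕ, g p.1 * f p.2) := by
        rw [Summable.tsum_add (hmul1.mul_left _) (hmul2.mul_left _), tsum_mul_left, tsum_mul_left]
      _ = 2 ^ α * ((∑' n, f n) * (∑' n, g n)) + 2 ^ α * ((∑' n, g n) * (∑' n, f n)) := by
        rw [Summable.tsum_mul_tsum hfsum hgsum hmul1, Summable.tsum_mul_tsum hgsum hfsum hmul2]
  have hfts0 : 0 ≤ ∑' n, f n := tsum_nonneg hfnn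
  have hgts0 : 0 ≤ ∑' n, g n := tsum_nonneg hgnn
  have hprod : (∑' n, f n) * (∑' n, g n)
      ≤ (C * S * t ^ (-(α + (d:ℝ)/2))) * (C * S * t ^ (-((0:ℝ) + (d:ℝ)/2))) :=
    mul_le_mul hfts hgts hgts0 (by positivity)
  have htt : t ^ (-(α + (d:ℝ)/2)) * t ^ (-((0:ℝ) + (d:ℝ)/2)) = t ^ (-α - (d:ℝ)) := by
    rw [← Real.rpow_add ht]
    ring_nf
  have h2a : (2:ℝ) ^ α * 2 = 2 ^ (α + 1) := by
    rw [Real.rpow_add (by norm_num : (0:ℝ) < 2), Real.rpow_one]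
  have hEF : C ^ 2 * (2 ^ (α + 1) * S ^ 2 / Fint) * Fint * t ^ (-α - (d:ℝ))
      = 2 ^ (α + 1) * S ^ 2 * C ^ 2 * t ^ (-α - (d:ℝ)) := by
    have h := div_mul_cancel₀ (2 ^ (α + 1) * S ^ 2) (ne_of_gt hF)
    calc C ^ 2 * (2 ^ (α + 1) * S ^ 2 / Fint) * Fint * t ^ (-α - (d:ℝ))
        = C ^ 2 * ((2 ^ (α + 1) * S ^ 2 / Fint) * Fint) * t ^ (-α - (d:ℝ)) := by ring
      _ = 2 ^ (α + 1) * S ^ 2 * C ^ 2 * t ^ (-α - (d:ℝ)) := by rw [h]; ring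
  rw [hEF]
  calc ∑' p, T p ≤ 2 ^ α * ((∑' n, f n) * (∑' n, g n))
      + 2 ^ α * ((∑' n, g n) * (∑' n, f n)) := hstep1
    _ = 2 ^ α * 2 * ((∑' n, f n) * (∑' n, g n)) := by ring
    _ ≤ 2 ^ α * 2 * ((C * S * t ^ (-(α + (d:ℝ)/2))) * (C * S * t ^ (-((0:ℝ) + (d:ℝ)/2)))) := by
        apply mul_le_mul_of_nonneg_left hprod
        have : (0:ℝ) ≤ 2 ^ α := Real.rpow_nonneg (by norm_num) α
        linarith
    _ = 2 ^ α * 2 * (C * S * (C * S) * (t ^ (-(α + (d:ℝ)/2)) * t ^ (-((0:ℝ) + (d:ℝ)/2)))) := by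
        ring
    _ = 2 ^ (α + 1) * S ^ 2 * C ^ 2 * t ^ (-α - (d:ℝ)) := by
        rw [htt, ← h2a]; ring
end
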